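/- arXiv:2303.02790 — 2 statements merged into one kernel-verified Lean document; each statement's English description precedes it below -/
import Mathlib

section
/- There is an absolute constant C > 0 with the following property. Let Λ be a nonempty finite set, a > 0, and let g : Λ × Λ → ℝ be a symmetric positive semidefinite kernel (i.e. Σ_{x,y∈Λ} f(x) f(y) g(x,y) ≥ 0 for every f : Λ → ℝ) satisfying a^4 · max_{x∈Λ} Σ_{y∈Λ} |g(x,y)| ≤ G. Let n ≥ 2, let α_1,...,α_n be real numbers with |α_j| ≤ ᾱ for all j, and for x_1,...,x_n ∈ Λ let φ_n(x_1,...,x_n) denote the Ursell function of the n×n positive semidefinite matrix with entries α_j α_{j'} g(x_j, x_{j'}), where the Ursell functions φ(Y) of a symmetric positive semidefinite matrix (g_{jj'}) are defined by φ({j}) = e^{-g_{jj}} and, for |Y| ≥ 2, by e^{-Σ_{j,j'∈Y} g_{jj'}} = Σ_π ∏_{B∈π} φ(B), the sum running over partitions π of Y. Then max_{x_1∈Λ} a^{4(n-1)} Σ_{x_2,...,x_n∈Λ} |φ_n(x_1,...,x_n)| ≤ C^n · n! · (ᾱ^2 G)^{n-1}. -/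
/-- `P` is a partition of the finite set `Y` into nonempty blocks. -/
def IsPartitionOf {n : ℕ} (P : Finset (Finset (Fin n))) (Y : Finset (Fin n)) : Prop :=
  (∀ B ∈ P, B.Nonempty) ∧
  ((P : Set (Finset (Fin n))).PairwiseDisjoint id) ∧
  P.sup id = Y

/-!
Write `v_{ij} = α_i α_j g(x_i, x_j)`. Interpolating `s ↦ v` with the couplings between a set `A`
and its complement scaled by `s ∈ [0, 1]`, and differentiating `exp (-∑_Y v)` along the way,
yields the Brydges–Battle–Federbush expansion
`exp (-∑_Y v) = ∑_{A ⊆ B ⊆ Y} K_A^B(v) exp (-∑_{Y \ B} v)`.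
For `A = {min Y}` this has the same first-block structure as the partition expansion defining the
Ursell functions, so by induction `φ(Y) = K_{min Y}^Y(v)`.

The interpolated matrices stay positive semidefinite, so the Gaussian factor left in `K` is at
most `1`, and each of the `n - 1` differentiations brings down one coupling `|v_{ij}|` from an
already connected point `i` to a new point `j`. Summing over the position of `x_j` costs
`ᾱ² G / a⁴` by the `ℓ¹` bound on `g`, and the `s`-integrals, which weigh the `(n - 1)!` orders in
which points get connected, are absorbed into `(n - 1)! e^n`.
-/

open Finset Real
open scoped Nat

namespace IsPartitionOf

variable {n : ℕ} {P : Finset (Finset (Fin n))} {Y B : Finset (Fin n)}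

theorem subset (hP : IsPartitionOf P Y) (hB : B ∈ P) : B ⊆ Y :=
  hP.2.2 ▸ le_sup (f := id) hB

theorem existsUnique_mem (hP : IsPartitionOf P Y) {r : Fin n} (hr : r ∈ Y) :
    ∃! B, B ∈ P ∧ r ∈ B := by
  obtain ⟨B, hBP, hrB⟩ := mem_sup.1 (hP.2.2 ▸ hr : r ∈ P.sup id)
  refine ⟨B, ⟨hBP, hrB⟩, fun C ⟨hCP, hrC⟩ => ?_⟩
  by_contra hne
  exact disjoint_left.1 (hP.2.1 hCP hBP hne) hrC hrB

theorem notMem_of_sdiff (hB : B.Nonempty) (hP : IsPartitionOf P (Y \ B)) : B ∉ P := by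
  intro hBP
  obtain ⟨r, hr⟩ := hB
  exact (mem_sdiff.1 (hP.subset hBP hr)).2 hr

theorem insert (hBY : B ⊆ Y) (hB : B.Nonempty) (hP : IsPartitionOf P (Y \ B)) :
    IsPartitionOf (insert B P) Y := by
  refine ⟨fun C hC => ?_, ?_, ?_⟩
  · rcases mem_insert.1 hC with rfl | hC
    exacts [hB, hP.1 C hC]
  · rw [coe_insert]
    exact hP.2.1.insert fun C hC _ => disjoint_sdiff.mono_right (hP.subset hC)
  · rw [sup_insert, hP.2.2]
    exact union_sdiff_of_subset hBY

theorem erase (hP : IsPartitionOf P Y) (hB : B ∈ P) : IsPartitionOf (P.erase B) (Y \ B) := by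
  refine ⟨fun C hC => hP.1 C (mem_of_mem_erase hC), hP.2.1.subset (by simp), ?_⟩
  ext r
  simp only [mem_sup, mem_erase, id, mem_sdiff]
  constructor
  · rintro ⟨C, ⟨hCB, hCP⟩, hrC⟩
    exact ⟨hP.subset hCP hrC, disjoint_left.1 (hP.2.1 hCP hB hCB) hrC⟩
  · rintro ⟨hrY, hrB⟩
    obtain ⟨C, hCP, hrC⟩ := mem_sup.1 (hP.2.2 ▸ hrY : r ∈ P.sup id)
    exact ⟨C, ⟨by rintro rfl; exact hrB hrC, hCP⟩, hrC⟩

end IsPartitionOf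

namespace Ursell

section Interpolation

variable {ι : Type*}

noncomputable def expWeight (Y : Finset ι) (v : ι → ι → ℝ) : ℝ :=
  exp (-∑ i ∈ Y, ∑ j ∈ Y, v i j)

@[simp]
theorem expWeight_empty (v : ι → ι → ℝ) : expWeight ∅ v = 1 := by
  simp [expWeight]

theorem expWeight_pos (Y : Finset ι) (v : ι → ι → ℝ) : 0 < expWeight Y v :=
  exp_pos _

theorem continuous_expWeight (Y : Finset ι) : Continuous (expWeight Y) := by
  unfold expWeight
  fun_prop

variable [DecidableEq ι]

def crossScale (A : Finset ι) (s : ℝ) (v : ι → ι → ℝ) : ι → ι → ℝ :=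
  fun i j => if (i ∈ A ↔ j ∈ A) then v i j else s * v i j

@[simp]
theorem crossScale_one (A : Finset ι) (v : ι → ι → ℝ) : crossScale A 1 v = v := by
  ext i j
  simp [crossScale]

theorem crossScale_symm {v : ι → ι → ℝ} (hv : ∀ i j, v i j = v j i) (A : Finset ι) (s : ℝ)
    (i j : ι) : crossScale A s v i j = crossScale A s v j i := by
  simp only [crossScale, hv i j, iff_comm]

theorem continuous_crossScale (A : Finset ι) :
    Continuous fun p : (ι → ι → ℝ) × ℝ => crossScale A p.2 p.1 := by
  refine continuous_pi fun i => continuous_pi fun j => ?_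
  simp only [crossScale]
  split_ifs <;> fun_prop

theorem sum_crossScale {v : ι → ι → ℝ} (hv : ∀ i j, v i j = v j i) {A Y : Finset ι}
    (hAY : A ⊆ Y) (s : ℝ) :
    ∑ i ∈ Y, ∑ j ∈ Y, crossScale A s v i j =
      ∑ i ∈ A, ∑ j ∈ A, v i j + ∑ i ∈ Y \ A, ∑ j ∈ Y \ A, v i j +
        s * (2 * ∑ i ∈ A, ∑ j ∈ Y \ A, v i j) := by
  have hd : Disjoint A (Y \ A) := disjoint_sdiff
  have cross : ∑ i ∈ Y \ A, ∑ j ∈ A, v i j = ∑ i ∈ A, ∑ j ∈ Y \ A, v i j := by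
    rw [sum_comm]
    simp only [hv]
  rw [← union_sdiff_of_subset hAY, sum_union hd]
  simp only [sum_union hd, sum_add_distrib, union_sdiff_cancel_left hd]
  have hA : ∀ i ∈ A, ∀ j ∈ A, crossScale A s v i j = v i j := fun i hi j hj => by
    simp [crossScale, hi, hj]
  have hAD : ∀ i ∈ A, ∀ j ∈ Y \ A, crossScale A s v i j = s * v i j := fun i hi j hj => by
    simp [crossScale, hi, (mem_sdiff.1 hj).2]
  have hDA : ∀ i ∈ Y \ A, ∀ j ∈ A, crossScale A s v i j = s * v i j := fun i hi j hj => by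
    simp [crossScale, hj, (mem_sdiff.1 hi).2]
  have hD : ∀ i ∈ Y \ A, ∀ j ∈ Y \ A, crossScale A s v i j = v i j := fun i hi j hj => by
    simp [crossScale, (mem_sdiff.1 hi).2, (mem_sdiff.1 hj).2]
  rw [sum_congr rfl fun i hi => sum_congr rfl (hA i hi),
    sum_congr rfl fun i hi => sum_congr rfl (hAD i hi),
    sum_congr rfl fun i hi => sum_congr rfl (hDA i hi),
    sum_congr rfl fun i hi => sum_congr rfl (hD i hi)]
  simp only [← mul_sum, cross]
  ring

theorem expWeight_crossScale_of_disjoint {A Y : Finset ι} (hd : Disjoint Y A) (s : ℝ)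
    (v : ι → ι → ℝ) : expWeight Y (crossScale A s v) = expWeight Y v := by
  unfold expWeight
  congr 2
  refine sum_congr rfl fun i hi => sum_congr rfl fun j hj => ?_
  simp [crossScale, disjoint_left.1 hd hi, disjoint_left.1 hd hj]

theorem expWeight_crossScale_zero {v : ι → ι → ℝ} (hv : ∀ i j, v i j = v j i) {A Y : Finset ι}
    (hAY : A ⊆ Y) : expWeight Y (crossScale A 0 v) = expWeight A v * expWeight (Y \ A) v := by
  rw [expWeight, sum_crossScale hv hAY, zero_mul, add_zero, neg_add, exp_add]
  rfl

theorem hasDerivAt_expWeight_crossScale {v : ι → ι → ℝ} (hv : ∀ i j, v i j = v j i)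
    {A Y : Finset ι} (hAY : A ⊆ Y) (s : ℝ) :
    HasDerivAt (fun s => expWeight Y (crossScale A s v))
      (∑ i ∈ A, ∑ j ∈ Y \ A, -2 * v i j * expWeight Y (crossScale A s v)) s := by
  have hsum : ∀ E : ℝ, ∑ i ∈ A, ∑ j ∈ Y \ A, -2 * v i j * E =
      E * -(1 * (2 * ∑ i ∈ A, ∑ j ∈ Y \ A, v i j)) := fun E => by
    simp only [← sum_mul, ← mul_sum]
    ring
  unfold expWeight
  simp_rw [hsum, sum_crossScale hv hAY]
  exact (((hasDerivAt_id s).mul_const _).const_add _).neg.exp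

theorem expWeight_eq_add_integral {v : ι → ι → ℝ} (hv : ∀ i j, v i j = v j i)
    {A Y : Finset ι} (hAY : A ⊆ Y) :
    expWeight Y v = expWeight A v * expWeight (Y \ A) v +
      ∫ s in (0 : ℝ)..1, ∑ i ∈ A, ∑ j ∈ Y \ A, -2 * v i j * expWeight Y (crossScale A s v) := by
  have hcont : Continuous fun s => expWeight Y (crossScale A s v) :=
    (continuous_expWeight Y).comp ((continuous_crossScale A).comp (Continuous.prodMk_right v))
  rw [intervalIntegral.integral_eq_sub_of_hasDerivAt
    (fun s _ => hasDerivAt_expWeight_crossScale hv hAY s)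
    ((continuous_finsetSum _ fun i _ => continuous_finsetSum _ fun j _ =>
      continuous_const.mul hcont).intervalIntegrable _ _),
    crossScale_one, expWeight_crossScale_zero hv hAY]
  ring

theorem crossScale_eq_mul {v u : ι → ι → ℝ} {w : ι → ℝ} {A : Finset ι} (hw : ∀ m ∉ A, w m = 1)
    (hvu : ∀ i, ∀ k ∉ A, v i k = w i * u i k) (s : ℝ) :
    ∀ i, ∀ k ∉ A, crossScale A s v i k = (if i ∈ A then s * w i else 1) * u i k := by
  intro i k hk
  by_cases hi : i ∈ A
  · simp [crossScale, hi, hk, hvu i k hk, mul_assoc]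
  · simp [crossScale, hi, hk, hvu i k hk, hw i hi]

theorem card_sdiff_insert_lt {A B : Finset ι} {j : ι} (hj : j ∈ B \ A) :
    #(B \ insert j A) < #(B \ A) := by
  rw [sdiff_insert]
  exact card_erase_lt_of_mem hj

/-- The Brydges–Battle–Federbush kernel `K_A^B(v)`: connect the points of `B \ A` to `A` one at
a time, each new link `ij` from `i ∈ A` to `j ∉ A` carrying the derivative `-2 v i j` of the
interpolation `crossScale A s` that switches on the couplings across `A`. -/
noncomputable def bbfKernel (A B : Finset ι) (v : ι → ι → ℝ) : ℝ :=
  if B ⊆ A then expWeight A v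
  else ∫ s in (0 : ℝ)..1, ∑ i ∈ A, ∑ j ∈ (B \ A).attach,
    -2 * v i j * bbfKernel (insert j.1 A) B (crossScale A s v)
termination_by #(B \ A)
decreasing_by exact card_sdiff_insert_lt j.2

theorem bbfKernel_of_subset {A B : Finset ι} (h : B ⊆ A) (v : ι → ι → ℝ) :
    bbfKernel A B v = expWeight A v := by
  rw [bbfKernel, if_pos h]

theorem bbfKernel_of_not_subset {A B : Finset ι} (h : ¬B ⊆ A) (v : ι → ι → ℝ) :
    bbfKernel A B v = ∫ s in (0 : ℝ)..1, ∑ i ∈ A, ∑ j ∈ B \ A,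
      -2 * v i j * bbfKernel (insert j A) B (crossScale A s v) := by
  rw [bbfKernel, if_neg h]
  refine intervalIntegral.integral_congr fun s _ => sum_congr rfl fun i _ => ?_
  exact sum_attach (B \ A) fun j => -2 * v i j * bbfKernel (insert j A) B (crossScale A s v)

theorem continuous_bbfKernel (A B : Finset ι) : Continuous (bbfKernel A B) := by
  change Continuous fun v => bbfKernel A B v
  by_cases h : B ⊆ A
  · simp_rw [bbfKernel_of_subset h]
    exact continuous_expWeight A
  · simp_rw [bbfKernel_of_not_subset h]
    refine intervalIntegral.continuous_parametric_intervalIntegral_of_continuous'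
      (continuous_finsetSum _ fun i _ => continuous_finsetSum _ fun j hj => ?_) 0 1
    have := card_sdiff_insert_lt hj
    exact (continuous_const.mul ((continuous_apply_apply i j).comp continuous_fst)).mul
      ((continuous_bbfKernel (insert j A) B).comp (continuous_crossScale A))
termination_by #(B \ A)

theorem continuous_bbfKernel_crossScale (A A' B : Finset ι) (v : ι → ι → ℝ) :
    Continuous fun s => bbfKernel A' B (crossScale A s v) :=
  (continuous_bbfKernel A' B).comp ((continuous_crossScale A).comp (Continuous.prodMk_right v))

theorem sum_sdiff_sum_superset_insert {M : Type*} [AddCommMonoid M] (A Y : Finset ι)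
    (f : ι → Finset ι → M) :
    ∑ j ∈ Y \ A, ∑ B ∈ Y.powerset with insert j A ⊆ B, f j B =
      ∑ B ∈ Y.powerset with A ⊂ B, ∑ j ∈ B \ A, f j B := by
  refine sum_comm' fun j B => ?_
  simp only [mem_sdiff, mem_filter, mem_powerset, insert_subset_iff]
  constructor
  · rintro ⟨⟨-, hjA⟩, hBY, hjB, hAB⟩
    exact ⟨⟨hjB, hjA⟩, hBY, ssubset_of_subset_of_ne hAB (by rintro rfl; exact hjA hjB)⟩
  · rintro ⟨⟨hjB, hjA⟩, hBY, hAB⟩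
    exact ⟨⟨hBY hjB, hjA⟩, hBY, hjB, hAB.subset⟩

theorem sum_subset_eq_add_sum_ssubset {M : Type*} [AddCommMonoid M] {A Y : Finset ι}
    (hAY : A ⊆ Y) (f : Finset ι → M) :
    ∑ B ∈ Y.powerset with A ⊆ B, f B = f A + ∑ B ∈ Y.powerset with A ⊂ B, f B := by
  rw [← add_sum_erase _ _ (mem_filter.2 ⟨mem_powerset.2 hAY, subset_rfl⟩)]
  congr 2
  ext B
  simp only [mem_erase, mem_filter, ssubset_iff_subset_ne, ne_comm]
  tauto

theorem expWeight_eq_sum_bbfKernel {v : ι → ι → ℝ} (hv : ∀ i j, v i j = v j i)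
    {A Y : Finset ι} (hAY : A ⊆ Y) :
    expWeight Y v = ∑ B ∈ Y.powerset with A ⊆ B, bbfKernel A B v * expWeight (Y \ B) v := by
  have hexpand : ∀ s, ∑ i ∈ A, ∑ j ∈ Y \ A, -2 * v i j * expWeight Y (crossScale A s v) =
      ∑ B ∈ Y.powerset with A ⊂ B, (∑ i ∈ A, ∑ j ∈ B \ A,
        -2 * v i j * bbfKernel (insert j A) B (crossScale A s v)) * expWeight (Y \ B) v := by
    intro s
    calc _ = ∑ i ∈ A, ∑ j ∈ Y \ A, ∑ B ∈ Y.powerset with insert j A ⊆ B,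
          -2 * v i j * bbfKernel (insert j A) B (crossScale A s v) * expWeight (Y \ B) v := by
          refine sum_congr rfl fun i _ => sum_congr rfl fun j hj => ?_
          have := card_sdiff_insert_lt hj
          rw [expWeight_eq_sum_bbfKernel (crossScale_symm hv A s)
            (insert_subset (mem_sdiff.1 hj).1 hAY), mul_sum]
          refine sum_congr rfl fun B hB => ?_
          have hd : Disjoint (Y \ B) A :=
            disjoint_sdiff_self_left.mono_right ((subset_insert j A).trans (mem_filter.1 hB).2)
          rw [expWeight_crossScale_of_disjoint hd]
          ring
      _ = _ := by
          simp only [sum_sdiff_sum_superset_insert, sum_mul]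
          exact sum_comm
  rw [sum_subset_eq_add_sum_ssubset hAY, bbfKernel_of_subset subset_rfl,
    expWeight_eq_add_integral hv hAY, intervalIntegral.integral_congr fun s _ => hexpand s,
    intervalIntegral.integral_finsetSum]
  · refine congrArg _ (sum_congr rfl fun B hB => ?_)
    rw [intervalIntegral.integral_mul_const,
      bbfKernel_of_not_subset (mem_filter.1 hB).2.not_subset]
  · intro B _
    exact (Continuous.mul (continuous_finsetSum _ fun i _ => continuous_finsetSum _ fun j _ =>
      continuous_const.mul (continuous_bbfKernel_crossScale _ _ _ v))
        continuous_const).intervalIntegrable _ _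
termination_by #(Y \ A)

theorem abs_bbfKernel_le {A B : Finset ι} (h : ¬B ⊆ A) (v : ι → ι → ℝ) :
    |bbfKernel A B v| ≤ ∫ s in (0 : ℝ)..1, ∑ i ∈ A, ∑ j ∈ B \ A,
      2 * |v i j| * |bbfKernel (insert j A) B (crossScale A s v)| := by
  have hcont := continuous_bbfKernel_crossScale (v := v) A
  rw [bbfKernel_of_not_subset h]
  refine (intervalIntegral.abs_integral_le_integral_abs zero_le_one).trans
    (intervalIntegral.integral_mono_on zero_le_one ?_ ?_ fun s _ => ?_)
  · exact (continuous_finsetSum _ fun i _ => continuous_finsetSum _ fun j _ =>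
      continuous_const.mul (hcont _ _)).abs.intervalIntegrable _ _
  · exact (continuous_finsetSum _ fun i _ => continuous_finsetSum _ fun j _ =>
      continuous_const.mul (hcont _ _).abs).intervalIntegrable _ _
  · refine (abs_sum_le_sum_abs _ _).trans (sum_le_sum fun i _ => ?_)
    refine (abs_sum_le_sum_abs _ _).trans_eq (sum_congr rfl fun j _ => ?_)
    rw [abs_mul, abs_mul, abs_neg, abs_two]

end Interpolation

section Partitions

variable {n : ℕ} {P : Finset (Finset (Fin n))} {Y : Finset (Fin n)}

open scoped Classical in
noncomputable def partitions (Y : Finset (Fin n)) : Finset (Finset (Finset (Fin n))) :=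
  univ.filter fun P => IsPartitionOf P Y

theorem mem_partitions : P ∈ partitions Y ↔ IsPartitionOf P Y := by
  simp [partitions]

theorem partitions_empty : partitions (∅ : Finset (Fin n)) = {∅} := by
  ext P
  simp only [mem_partitions, mem_singleton]
  constructor
  · intro hP
    by_contra hne
    obtain ⟨B, hB⟩ := nonempty_iff_ne_empty.2 hne
    obtain ⟨r, hr⟩ := hP.1 B hB
    simpa using hP.subset hB hr
  · rintro rfl
    exact ⟨by simp, by simp, by simp⟩

theorem sum_partitions_eq_sum_block {M : Type*} [CommSemiring M] (f : Finset (Fin n) → M)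
    {r : Fin n} (hr : r ∈ Y) :
    ∑ P ∈ partitions Y, ∏ B ∈ P, f B =
      ∑ B ∈ Y.powerset with r ∈ B, f B * ∑ P ∈ partitions (Y \ B), ∏ C ∈ P, f C := by
  calc ∑ P ∈ partitions Y, ∏ B ∈ P, f B
      = ∑ P ∈ partitions Y, ∑ B ∈ P with r ∈ B, f B * ∏ C ∈ P.erase B, f C := by
        refine sum_congr rfl fun P hP => ?_
        obtain ⟨B, ⟨hBP, hrB⟩, huniq⟩ := (mem_partitions.1 hP).existsUnique_mem hr
        have : {C ∈ P | r ∈ C} = {B} := by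
          ext C
          simp only [mem_filter, mem_singleton]
          exact ⟨huniq C, by rintro rfl; exact ⟨hBP, hrB⟩⟩
        rw [this, sum_singleton, mul_prod_erase _ _ hBP]
    _ = ∑ B ∈ Y.powerset with r ∈ B, ∑ P ∈ partitions Y with B ∈ P,
          f B * ∏ C ∈ P.erase B, f C := by
        refine sum_comm' fun P B => ?_
        simp only [mem_filter, mem_powerset, mem_partitions]
        exact ⟨fun ⟨hP, hBP, hrB⟩ => ⟨⟨hP, hBP⟩, hP.subset hBP, hrB⟩,
          fun ⟨⟨hP, hBP⟩, _, hrB⟩ => ⟨hP, hBP, hrB⟩⟩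
    _ = _ := by
        refine sum_congr rfl fun B hB => ?_
        obtain ⟨hBY, hrB⟩ := mem_filter.1 hB
        rw [mul_sum]
        refine sum_nbij' (fun P => P.erase B) (fun P => insert B P) ?_ ?_ ?_ ?_ fun _ _ => rfl
        · intro P hP
          obtain ⟨hP, hBP⟩ := mem_filter.1 hP
          exact mem_partitions.2 ((mem_partitions.1 hP).erase hBP)
        · intro P hP
          exact mem_filter.2 ⟨mem_partitions.2 ((mem_partitions.1 hP).insert
            (mem_powerset.1 hBY) ⟨r, hrB⟩), mem_insert_self B P⟩
        · intro P hP
          exact insert_erase (mem_filter.1 hP).2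
        · intro P hP
          exact erase_insert ((mem_partitions.1 hP).notMem_of_sdiff ⟨r, hrB⟩)

theorem sum_partitions_singleton {M : Type*} [CommSemiring M] (f : Finset (Fin n) → M)
    (j : Fin n) : ∑ P ∈ partitions {j}, ∏ B ∈ P, f B = f {j} := by
  have : ({j} : Finset (Fin n)).powerset.filter (j ∈ ·) = {{j}} := by
    ext B
    simp only [mem_filter, mem_powerset, subset_singleton_iff, mem_singleton]
    constructor
    · rintro ⟨rfl | rfl, h⟩
      exacts [absurd h (notMem_empty j), rfl]
    · rintro rfl
      exact ⟨Or.inr rfl, mem_singleton_self j⟩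
  rw [sum_partitions_eq_sum_block f (mem_singleton_self j), this, sum_singleton, sdiff_self,
    bot_eq_empty, partitions_empty, sum_singleton, prod_empty, mul_one]

theorem sum_partitions_eq_expWeight {v : Fin n → Fin n → ℝ} {Φ : Finset (Fin n) → ℝ}
    (h1 : ∀ j, Φ {j} = exp (-v j j))
    (h2 : ∀ Y : Finset (Fin n), 2 ≤ #Y → expWeight Y v = ∑ P ∈ partitions Y, ∏ B ∈ P, Φ B)
    (Y : Finset (Fin n)) : ∑ P ∈ partitions Y, ∏ B ∈ P, Φ B = expWeight Y v := by
  obtain hY | hY | hY : #Y = 0 ∨ #Y = 1 ∨ 2 ≤ #Y := by omega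
  · rw [card_eq_zero.1 hY, partitions_empty, sum_singleton, prod_empty, expWeight_empty]
  · obtain ⟨j, rfl⟩ := card_eq_one.1 hY
    rw [sum_partitions_singleton, h1]
    simp [expWeight]
  · exact (h2 Y hY).symm

theorem eq_bbfKernel_of_sum_partitions {v : Fin n → Fin n → ℝ} (hv : ∀ i j, v i j = v j i)
    {Φ : Finset (Fin n) → ℝ} (hΦ : ∀ Y, ∑ P ∈ partitions Y, ∏ B ∈ P, Φ B = expWeight Y v)
    (Y : Finset (Fin n)) (hY : Y.Nonempty) : Φ Y = bbfKernel {Y.min' hY} Y v := by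
  induction Y using Finset.strongInduction with
  | H Y ih =>
  set r := Y.min' hY
  have hr : r ∈ Y := min'_mem Y hY
  have hYmem : Y ∈ Y.powerset.filter (r ∈ ·) := mem_filter.2 ⟨mem_powerset_self Y, hr⟩
  have key : ∑ B ∈ Y.powerset with r ∈ B, Φ B * expWeight (Y \ B) v =
      ∑ B ∈ Y.powerset with r ∈ B, bbfKernel {r} B v * expWeight (Y \ B) v := by
    have := expWeight_eq_sum_bbfKernel hv (singleton_subset_iff.2 hr)
    simp only [singleton_subset_iff] at this
    rw [← this, ← hΦ Y, sum_partitions_eq_sum_block Φ hr]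
    simp only [hΦ]
  have hproper : ∑ B ∈ (Y.powerset.filter (r ∈ ·)).erase Y, Φ B * expWeight (Y \ B) v =
      ∑ B ∈ (Y.powerset.filter (r ∈ ·)).erase Y, bbfKernel {r} B v * expWeight (Y \ B) v := by
    refine sum_congr rfl fun B hB => ?_
    obtain ⟨hBY, hB⟩ := mem_erase.1 hB
    obtain ⟨hBY', hrB⟩ := mem_filter.1 hB
    have hmin : B.min' ⟨r, hrB⟩ = r :=
      le_antisymm (min'_le B r hrB) (min'_le Y _ (mem_powerset.1 hBY' (min'_mem B _)))
    rw [ih B (ssubset_of_subset_of_ne (mem_powerset.1 hBY') hBY) ⟨r, hrB⟩, hmin]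
  rw [← add_sum_erase _ _ hYmem, ← add_sum_erase _ _ hYmem, hproper, sdiff_self,
    bot_eq_empty, expWeight_empty, mul_one, mul_one] at key
  exact add_right_cancel key

end Partitions

section Positivity

variable {ι : Type*} [Fintype ι]

def PosSemidefKernel (v : ι → ι → ℝ) : Prop :=
  ∀ f : ι → ℝ, 0 ≤ ∑ i, ∑ j, f i * f j * v i j

theorem PosSemidefKernel.comp {Λ : Type*} [Fintype Λ] {g : Λ → Λ → ℝ}
    (hg : PosSemidefKernel g) (α : ι → ℝ) (x : ι → Λ) :
    PosSemidefKernel fun i j => α i * α j * g (x i) (x j) := by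
  classical
  intro t
  have hfiber : ∀ h : Λ → ℝ,
      ∑ i, t i * α i * h (x i) = ∑ a, (∑ i with x i = a, t i * α i) * h a := fun h => by
    rw [← sum_fiberwise univ x]
    refine sum_congr rfl fun a _ => ?_
    rw [sum_mul]
    exact sum_congr rfl fun i hi => by rw [(mem_filter.1 hi).2]
  convert hg fun a => ∑ i with x i = a, t i * α i using 1
  calc ∑ i, ∑ j, t i * t j * (α i * α j * g (x i) (x j))
      = ∑ i, t i * α i * ∑ j, t j * α j * g (x i) (x j) := by
        simp only [mul_sum]
        exact sum_congr rfl fun i _ => sum_congr rfl fun j _ => by ring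
    _ = ∑ a, (∑ i with x i = a, t i * α i) * ∑ b, (∑ i with x i = b, t i * α i) * g a b := by
        simp only [hfiber]
        exact hfiber fun a => ∑ b, (∑ i with x i = b, t i * α i) * g a b
    _ = _ := by
        refine sum_congr rfl fun a _ => ?_
        rw [mul_sum]
        exact sum_congr rfl fun b _ => by ring

theorem PosSemidefKernel.sum_nonneg {v : ι → ι → ℝ} (hv : PosSemidefKernel v) (A : Finset ι) :
    0 ≤ ∑ i ∈ A, ∑ j ∈ A, v i j := by
  classical
  convert hv fun i => if i ∈ A then 1 else 0 using 1
  simp [ite_mul, sum_ite_mem]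

theorem expWeight_le_one {v : ι → ι → ℝ} (hv : PosSemidefKernel v) (A : Finset ι) :
    expWeight A v ≤ 1 :=
  exp_le_one_iff.2 (neg_nonpos.2 (hv.sum_nonneg A))

theorem posSemidefKernel_crossScale [DecidableEq ι] {v : ι → ι → ℝ} (hv : PosSemidefKernel v)
    (A : Finset ι) {s : ℝ} (hs : s ∈ Set.Icc (0 : ℝ) 1) :
    PosSemidefKernel (crossScale A s v) := by
  intro t
  set tA : ι → ℝ := fun i => if i ∈ A then t i else 0
  set tB : ι → ℝ := fun i => if i ∈ A then 0 else t i
  have hsplit : ∑ i, ∑ j, t i * t j * crossScale A s v i j =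
      s * ∑ i, ∑ j, t i * t j * v i j +
        (1 - s) * (∑ i, ∑ j, tA i * tA j * v i j + ∑ i, ∑ j, tB i * tB j * v i j) := by
    simp only [mul_sum, ← sum_add_distrib]
    refine sum_congr rfl fun i _ => sum_congr rfl fun j _ => ?_
    simp only [crossScale, tA, tB]
    split_ifs <;> simp_all <;> ring
  rw [hsplit]
  exact add_nonneg (mul_nonneg hs.1 (hv t))
    (mul_nonneg (sub_nonneg.2 hs.2) (add_nonneg (hv tA) (hv tB)))

end Positivity

/-- A solution of the recursion `F_{q+1}(T) ≥ (q + 1) 2κ T ∫₀¹ F_q(1 + s T) ds` obeyed by the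
sums of `|K_A^B|` over configurations, with `q = #(B \ A)` and `T` the total weight of `A`. -/
noncomputable def treeBound (κ : ℝ) (q : ℕ) (T : ℝ) : ℝ :=
  (2 * κ) ^ q * q ! * exp (q + T)

theorem treeBound_nonneg {κ : ℝ} (hκ : 0 ≤ κ) (q : ℕ) (T : ℝ) : 0 ≤ treeBound κ q T := by
  unfold treeBound
  positivity

theorem integral_treeBound_le {κ T : ℝ} (hκ : 0 ≤ κ) (q : ℕ) :
    ∫ s in (0 : ℝ)..1, (q + 1) * (2 * κ) * T * treeBound κ q (1 + s * T) ≤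
      treeBound κ (q + 1) T := by
  have hexp : ∫ s in (0 : ℝ)..1, T * exp (q + 1 + s * T) = exp (q + 1 + T) - exp (q + 1) := by
    have hcont : Continuous fun s => T * exp (q + 1 + s * T) := by fun_prop
    rw [intervalIntegral.integral_eq_sub_of_hasDerivAt (f := fun s => exp (q + 1 + s * T))
      (fun s _ => by simpa [mul_comm] using
        (((hasDerivAt_id s).mul_const T).const_add (q + 1 : ℝ)).exp)
      (hcont.intervalIntegrable 0 1)]
    simp
  calc ∫ s in (0 : ℝ)..1, (q + 1) * (2 * κ) * T * treeBound κ q (1 + s * T)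
      = (2 * κ) ^ (q + 1) * (q + 1) ! * ∫ s in (0 : ℝ)..1, T * exp (q + 1 + s * T) := by
        rw [← intervalIntegral.integral_const_mul]
        refine intervalIntegral.integral_congr fun s _ => ?_
        simp only [treeBound, Nat.factorial_succ]
        push_cast
        ring_nf
    _ ≤ treeBound κ (q + 1) T := by
        rw [hexp, treeBound]
        push_cast
        gcongr
        linarith [exp_pos (q + 1 : ℝ)]

theorem sum_abs_bbfKernel_le_treeBound_succ {ι Λ : Type*} [DecidableEq ι] {A B : Finset ι}
    (hBA : ¬B ⊆ A) {q : ℕ} (hq : #(B \ A) = q + 1) (X : Finset (ι → Λ))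
    (V : (ι → Λ) → ι → ι → ℝ) (w : ι → ℝ) {κ : ℝ} (hκ : 0 ≤ κ)
    (hstep : ∀ s ∈ Set.Icc (0 : ℝ) 1, ∀ i ∈ A, ∀ j ∈ B \ A,
      ∑ x ∈ X, 2 * |V x i j| * |bbfKernel (insert j A) B (crossScale A s (V x))| ≤
        2 * w i * κ * treeBound κ q (1 + s * ∑ m ∈ A, w m)) :
    ∑ x ∈ X, |bbfKernel A B (V x)| ≤ treeBound κ (q + 1) (∑ m ∈ A, w m) := by
  set T := ∑ m ∈ A, w m
  have hcont : ∀ x i j, Continuous fun s =>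
      2 * |V x i j| * |bbfKernel (insert j A) B (crossScale A s (V x))| :=
    fun x i j => continuous_const.mul (continuous_bbfKernel_crossScale A _ B (V x)).abs
  calc ∑ x ∈ X, |bbfKernel A B (V x)|
      ≤ ∑ x ∈ X, ∫ s in (0 : ℝ)..1, ∑ i ∈ A, ∑ j ∈ B \ A,
          2 * |V x i j| * |bbfKernel (insert j A) B (crossScale A s (V x))| :=
        sum_le_sum fun x _ => abs_bbfKernel_le hBA (V x)
    _ = ∫ s in (0 : ℝ)..1, ∑ i ∈ A, ∑ j ∈ B \ A, ∑ x ∈ X,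
          2 * |V x i j| * |bbfKernel (insert j A) B (crossScale A s (V x))| := by
        rw [← intervalIntegral.integral_finsetSum fun x _ =>
          (continuous_finsetSum _ fun i _ => continuous_finsetSum _ fun j _ =>
            hcont x i j).intervalIntegrable _ _]
        refine intervalIntegral.integral_congr fun s _ => ?_
        rw [sum_comm]
        exact sum_congr rfl fun i _ => sum_comm
    _ ≤ ∫ s in (0 : ℝ)..1, (q + 1) * (2 * κ) * T * treeBound κ q (1 + s * T) := by
        refine intervalIntegral.integral_mono_on zero_le_one
          ((continuous_finsetSum _ fun i _ => continuous_finsetSum _ fun j _ =>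
            continuous_finsetSum _ fun x _ => hcont x i j).intervalIntegrable _ _)
          ((by unfold treeBound; fun_prop : Continuous fun s : ℝ =>
            (q + 1) * (2 * κ) * T * treeBound κ q (1 + s * T)).intervalIntegrable _ _)
          fun s hs => ?_
        refine (sum_le_sum fun i hi => sum_le_sum fun j hj => hstep s hs i hi j hj).trans_eq ?_
        simp only [sum_const, hq, nsmul_eq_mul, T, mul_sum, sum_mul]
        refine sum_congr rfl fun i _ => ?_
        push_cast
        ring
    _ ≤ treeBound κ (q + 1) T := integral_treeBound_le hκ q

theorem pow_mul_treeBound_le {b K : ℝ} (hb : 0 < b) (hK : 0 ≤ K) {n : ℕ} (hn : 1 ≤ n) :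
    b ^ (n - 1) * treeBound (K / b) (n - 1) 1 ≤ 6 ^ n * n ! * K ^ (n - 1) := by
  obtain ⟨m, rfl⟩ := Nat.exists_eq_add_of_le' hn
  simp only [Nat.add_sub_cancel, treeBound]
  have h2 : b ^ m * (2 * (K / b)) ^ m = 2 ^ m * K ^ m := by
    rw [← mul_pow, ← mul_pow]
    congr 1
    field_simp
  have he : exp (m + 1) ≤ 3 ^ (m + 1) := by
    rw [show (m + 1 : ℝ) = ((m + 1 : ℕ) : ℝ) by push_cast; rfl, ← exp_one_pow]
    exact pow_le_pow_left₀ (exp_pos 1).le (exp_one_lt_d9.le.trans (by norm_num)) _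
  calc b ^ m * ((2 * (K / b)) ^ m * m ! * exp (m + 1))
      = (b ^ m * (2 * (K / b)) ^ m) * m ! * exp (m + 1) := by ring
    _ = 2 ^ m * K ^ m * m ! * exp (m + 1) := by rw [h2]
    _ ≤ 2 ^ (m + 1) * K ^ m * (m + 1) ! * 3 ^ (m + 1) := by gcongr <;> norm_num
    _ = 6 ^ (m + 1) * (m + 1) ! * K ^ m := by
        rw [show (6 : ℝ) = 2 * 3 by norm_num, mul_pow]
        ring

section Configurations

variable {ι Λ : Type*} [Fintype ι] [DecidableEq ι] [Fintype Λ]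

open scoped Classical in
noncomputable def agreeOutside (D : Finset ι) (y : ι → Λ) : Finset (ι → Λ) :=
  univ.filter fun x => ∀ m ∉ D, x m = y m

theorem mem_agreeOutside {D : Finset ι} {y x : ι → Λ} :
    x ∈ agreeOutside D y ↔ ∀ m ∉ D, x m = y m := by
  simp [agreeOutside]

theorem agreeOutside_empty (y : ι → Λ) : agreeOutside ∅ y = {y} := by
  ext x
  simp [mem_agreeOutside, funext_iff]

theorem filter_apply_eq_eq_agreeOutside (r : ι) (b : Λ)
    [DecidablePred fun x : ι → Λ => x r = b] :
    univ.filter (fun x : ι → Λ => x r = b) = agreeOutside (univ \ {r}) fun _ => b := by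
  ext x
  simp [mem_agreeOutside]

theorem sum_agreeOutside_eq_sum_erase {M : Type*} [AddCommMonoid M] {D : Finset ι} {j : ι}
    (hj : j ∈ D) (y : ι → Λ) (f : (ι → Λ) → M) :
    ∑ x ∈ agreeOutside D y, f x =
      ∑ c, ∑ x ∈ agreeOutside (D.erase j) (Function.update y j c), f x := by
  classical
  rw [← sum_fiberwise (agreeOutside D y) (· j) f]
  refine sum_congr rfl fun c _ => sum_congr ?_ fun _ _ => rfl
  ext x
  simp only [mem_filter, mem_agreeOutside, mem_erase, not_and_or, not_not]
  constructor
  · rintro ⟨hx, rfl⟩ m hm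
    rcases eq_or_ne m j with rfl | hmj
    · simp
    · rw [Function.update_of_ne hmj]
      exact hx m (hm.resolve_left hmj)
  · intro hx
    refine ⟨fun m hm => ?_, by simpa using hx j (Or.inl rfl)⟩
    have hmj : m ≠ j := by rintro rfl; exact hm hj
    rw [hx m (Or.inr hm), Function.update_of_ne hmj]

theorem sum_agreeOutside_abs_mul_le {D : Finset ι} {i j : ι} (hi : i ∉ D) (hj : j ∈ D)
    (y : ι → Λ) (u : Λ → Λ → ℝ) {κ M : ℝ} (hu : ∑ c, |u (y i) c| ≤ κ) (hM : 0 ≤ M)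
    (F : (ι → Λ) → ℝ)
    (hF : ∀ c, ∑ x ∈ agreeOutside (D.erase j) (Function.update y j c), F x ≤ M) :
    ∑ x ∈ agreeOutside D y, |u (x i) (x j)| * F x ≤ κ * M := by
  have hij : i ≠ j := by rintro rfl; exact hi hj
  rw [sum_agreeOutside_eq_sum_erase hj]
  calc ∑ c, ∑ x ∈ agreeOutside (D.erase j) (Function.update y j c), |u (x i) (x j)| * F x
      = ∑ c, |u (y i) c| * ∑ x ∈ agreeOutside (D.erase j) (Function.update y j c), F x := by
        refine sum_congr rfl fun c _ => ?_
        rw [mul_sum]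
        refine sum_congr rfl fun x hx => ?_
        have hx := mem_agreeOutside.1 hx
        rw [hx i (by simp [hi]), hx j (by simp), Function.update_of_ne hij,
          Function.update_self]
    _ ≤ ∑ c, |u (y i) c| * M := by gcongr with c; exact hF c
    _ ≤ κ * M := by rw [← sum_mul]; gcongr

/-- The tree-graph bound. Along the interpolation, `V x` keeps the couplings `U` from a point of
`A` to the outside damped by the weight `w` accumulated by that point. -/
theorem sum_abs_bbfKernel_le (U : ι → ι → Λ → Λ → ℝ) {κ : ℝ} (hκ : 0 ≤ κ)
    (hU : ∀ i k b, ∑ c, |U i k b c| ≤ κ) (A B : Finset ι) (V : (ι → Λ) → ι → ι → ℝ)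
    (hV : ∀ x, PosSemidefKernel (V x)) (w : ι → ℝ) (hw : ∀ m, 0 ≤ w m)
    (hw1 : ∀ m ∉ A, w m = 1) (hVU : ∀ x i, ∀ k ∉ A, V x i k = w i * U i k (x i) (x k))
    (y : ι → Λ) :
    ∑ x ∈ agreeOutside (B \ A) y, |bbfKernel A B (V x)| ≤
      treeBound κ #(B \ A) (∑ m ∈ A, w m) := by
  by_cases hBA : B ⊆ A
  · rw [sdiff_eq_empty_iff_subset.2 hBA, agreeOutside_empty, sum_singleton,
      bbfKernel_of_subset hBA, abs_of_pos (expWeight_pos A (V y))]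
    refine (expWeight_le_one (hV y) A).trans ?_
    simpa [treeBound] using one_le_exp (sum_nonneg fun m _ => hw m)
  obtain ⟨q, hq⟩ : ∃ q, #(B \ A) = q + 1 :=
    Nat.exists_eq_succ_of_ne_zero (card_ne_zero.2 (sdiff_nonempty.2 hBA))
  rw [hq]
  refine sum_abs_bbfKernel_le_treeBound_succ hBA hq _ V w hκ fun s hs i hi j hj => ?_
  have := card_sdiff_insert_lt hj
  have hjA := (mem_sdiff.1 hj).2
  set w' : ι → ℝ := fun m => if m ∈ A then s * w m else 1
  have hT' : ∑ m ∈ insert j A, w' m = 1 + s * ∑ m ∈ A, w m := by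
    rw [sum_insert hjA, mul_sum]
    simp only [w', if_neg hjA]
    exact congrArg _ (sum_congr rfl fun m hm => if_pos hm)
  have hrec := fun c => sum_abs_bbfKernel_le U hκ hU (insert j A) B
    (fun x => crossScale A s (V x)) (fun x => posSemidefKernel_crossScale (hV x) A hs) w'
    (fun m => by by_cases hm : m ∈ A <;> simp [w', hm, mul_nonneg hs.1 (hw m)])
    (fun m hm => if_neg (not_or.1 (mem_insert.not.1 hm)).2)
    (fun x i k hk => crossScale_eq_mul hw1 (hVU x) s i k (not_or.1 (mem_insert.not.1 hk)).2)
    (Function.update y j c)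
  rw [sdiff_insert, card_erase_of_mem hj, hq, Nat.add_sub_cancel, hT'] at hrec
  have hsplit : ∀ x, 2 * |V x i j| * |bbfKernel (insert j A) B (crossScale A s (V x))| =
      2 * w i * (|U i j (x i) (x j)| * |bbfKernel (insert j A) B (crossScale A s (V x))|) :=
    fun x => by rw [hVU x i j hjA, abs_mul, abs_of_nonneg (hw i)]; ring
  simp only [hsplit, ← mul_sum]
  rw [mul_assoc _ κ]
  exact mul_le_mul_of_nonneg_left (sum_agreeOutside_abs_mul_le (fun h => (mem_sdiff.1 h).2 hi)
    hj y (U i j) (hU i j (y i)) (treeBound_nonneg hκ _ _) _ hrec) (by linarith [hw i])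
termination_by #(B \ A)

end Configurations

theorem sum_abs_mul_mul_le {ι Λ : Type*} [Fintype Λ] {g : Λ → Λ → ℝ} {a G ᾱ : ℝ} (ha : 0 < a)
    (hg : ∀ x, a ^ 4 * ∑ y, |g x y| ≤ G) {α : ι → ℝ} (hα : ∀ j, |α j| ≤ ᾱ) (i k : ι)
    (b : Λ) : ∑ c, |α i * α k * g b c| ≤ ᾱ ^ 2 * G / a ^ 4 := by
  have hᾱ : 0 ≤ ᾱ := (abs_nonneg _).trans (hα i)
  rw [le_div_iff₀ (by positivity)]
  simp only [abs_mul, ← mul_sum]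
  calc |α i| * |α k| * (∑ c, |g b c|) * a ^ 4 = |α i| * |α k| * (a ^ 4 * ∑ c, |g b c|) := by
        ring
    _ ≤ ᾱ * ᾱ * G := by gcongr <;> first | exact hα _ | exact hg b
    _ = ᾱ ^ 2 * G := by ring

end Ursell

open Ursell

open scoped Classical in
/-- **Lemma 2.1 in abstract form.** There is an absolute constant `C > 0` such that for any
nonempty finite set `Λ`, any `a > 0`, any symmetric positive semidefinite kernel `g` on `Λ`
with `a^4 ⬝ max_x ∑_y |g x y| ≤ G`, any `n ≥ 2`, any charges `α_j` with `|α_j| ≤ ᾱ`, and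
`Φ x` the Ursell functions of the positive semidefinite matrix `(α_j α_{j'} g (x j) (x j'))`,
one has `max_{x₁} a^{4(n-1)} ∑_{x₂,…,x_n} |Φ x univ| ≤ C^n n! (ᾱ² G)^{n-1}`. -/
theorem ursell_kernel_bound :
    ∃ C : ℝ, 0 < C ∧
      ∀ (Λ : Type) [Fintype Λ] [Nonempty Λ] (a : ℝ), 0 < a →
      ∀ (g : Λ → Λ → ℝ), (∀ x y, g x y = g y x) →
        (∀ f : Λ → ℝ, 0 ≤ ∑ x : Λ, ∑ y : Λ, f x * f y * g x y) →
      ∀ (G : ℝ), (∀ x : Λ, a ^ 4 * ∑ y : Λ, |g x y| ≤ G) →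
      ∀ (n : ℕ), ∀ hn : 2 ≤ n,
      ∀ (α : Fin n → ℝ) (ᾱ : ℝ), (∀ j, |α j| ≤ ᾱ) →
      ∀ (Φ : (Fin n → Λ) → Finset (Fin n) → ℝ),
        (∀ (x : Fin n → Λ) (j : Fin n),
          Φ x {j} = Real.exp (-(α j * α j * g (x j) (x j)))) →
        (∀ (x : Fin n → Λ) (Y : Finset (Fin n)), 2 ≤ Y.card →
          Real.exp (-(∑ j ∈ Y, ∑ j' ∈ Y, α j * α j' * g (x j) (x j'))) =
            ∑ P ∈ Finset.univ.filter (fun P : Finset (Finset (Fin n)) => IsPartitionOf P Y),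
              ∏ B ∈ P, Φ x B) →
      ∀ x₁ : Λ,
        a ^ (4 * (n - 1)) *
            ∑ x ∈ Finset.univ.filter (fun x : Fin n → Λ => x ⟨0, by omega⟩ = x₁),
              |Φ x Finset.univ|
          ≤ C ^ n * (n.factorial : ℝ) * (ᾱ ^ 2 * G) ^ (n - 1) := by
  refine ⟨6, by norm_num, ?_⟩
  intro Λ _ _ a ha g hgsymm hpsd G hg n hn α ᾱ hα Φ hΦ1 hΦ2 x₁
  set r : Fin n := ⟨0, by omega⟩
  set v : (Fin n → Λ) → Fin n → Fin n → ℝ := fun x i j => α i * α j * g (x i) (x j)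
  have hG : 0 ≤ ᾱ ^ 2 * G :=
    mul_nonneg (sq_nonneg _) ((by positivity : 0 ≤ a ^ 4 * ∑ y, |g x₁ y|).trans (hg x₁))
  have hmin : univ.min' ⟨r, mem_univ r⟩ = r :=
    le_antisymm (min'_le _ _ (mem_univ r)) (Fin.mk_le_of_le_val (Nat.zero_le _))
  have hΦK : ∀ x, Φ x univ = bbfKernel {r} univ (v x) := fun x => by
    have hv : ∀ i j, v x i j = v x j i := fun i j => by simp only [v, hgsymm (x i)]; ring
    rw [eq_bbfKernel_of_sum_partitions hv (sum_partitions_eq_expWeight (hΦ1 x) (hΦ2 x)) univ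
      ⟨r, mem_univ r⟩, hmin]
  have hsum := sum_abs_bbfKernel_le (fun i k b c => α i * α k * g b c) (by positivity)
    (sum_abs_mul_mul_le ha hg hα) {r} univ v (fun x => PosSemidefKernel.comp hpsd α x)
    (fun _ => 1) (fun _ => zero_le_one) (fun _ _ => rfl) (fun x i k _ => (one_mul _).symm)
    fun _ => x₁
  rw [← filter_apply_eq_eq_agreeOutside] at hsum
  simp only [← hΦK, sum_const, card_singleton, one_smul, card_sdiff, inter_univ, card_univ,
    Fintype.card_fin] at hsum
  calc a ^ (4 * (n - 1)) * ∑ x ∈ univ.filter (fun x : Fin n → Λ => x r = x₁), |Φ x univ|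
      ≤ (a ^ 4) ^ (n - 1) * treeBound (ᾱ ^ 2 * G / a ^ 4) (n - 1) 1 := by
        rw [pow_mul]
        gcongr
    _ ≤ 6 ^ n * n ! * (ᾱ ^ 2 * G) ^ (n - 1) := pow_mul_treeBound_le (by positivity) hG (by omega)
end

section
/- Let a > 0, M > 0, and 0 ≤ ξ ≤ 1. For any k ∈ ℝ^4 set σ_μ(k) = (e^{i k_μ a} - 1)/a and |σ(k)|^2 = Σ_{μ=0}^3 |σ_μ(k)|^2, and let G(k) be the 4×4 complex matrix with entries G(k)_{μν} = (|σ(k)|^2 + M^2)^{-1} (δ_{μν} + ξ · conj(σ_μ(k)) σ_ν(k) / ((1-ξ)|σ(k)|^2 + M^2)). Then G(k) is Hermitian and positive definite. -/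
open scoped Real ComplexOrder

/-- The lattice symbol `σ_μ(k) = (e^{i k_μ a} - 1)/a`. -/
noncomputable def latticeSigma (a : ℝ) (k : Fin 4 → ℝ) (μ : Fin 4) : ℂ :=
  (Complex.exp (Complex.I * (k μ * a)) - 1) / a

/-- `|σ(k)|² = ∑_μ |σ_μ(k)|²`. -/
noncomputable def latticeSigmaSq (a : ℝ) (k : Fin 4 → ℝ) : ℝ :=
  ∑ μ : Fin 4, Complex.normSq (latticeSigma a k μ)

/-- The momentum-space covariance matrix of the massive lattice `U(1)` gauge field,
`G(k)_{μν} = (|σ(k)|² + M²)⁻¹ (δ_{μν} + ξ conj(σ_μ(k)) σ_ν(k) / ((1-ξ)|σ(k)|² + M²))`. -/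
noncomputable def covMatrix (a M ξ : ℝ) (k : Fin 4 → ℝ) : Matrix (Fin 4) (Fin 4) ℂ :=
  Matrix.of fun μ ν =>
    (((latticeSigmaSq a k + M ^ 2)⁻¹ : ℝ) : ℂ) *
      ((if μ = ν then 1 else 0) +
        (ξ : ℂ) * (starRingEnd ℂ (latticeSigma a k μ)) * latticeSigma a k ν /
          ((((1 - ξ) * latticeSigmaSq a k + M ^ 2 : ℝ)) : ℂ))

/-!
`G(k)` is a positive multiple of `1 + t σ* σᵀ` with `t = ξ / ((1-ξ)|σ|² + M²) ≥ 0`: the identity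
plus a nonnegative multiple of a rank-one Gram matrix, hence positive definite.
-/

open Matrix

theorem Matrix.posDef_one_add_smul_vecMulVec_star_self {n 𝕜 : Type*} [Fintype n] [DecidableEq n]
    [RCLike 𝕜] (v : n → 𝕜) {t : ℝ} (ht : 0 ≤ t) :
    (1 + t • vecMulVec (star v) v).PosDef :=
  PosDef.one.add_posSemidef ((posSemidef_vecMulVec_star_self v).smul ht)

theorem latticeSigmaSq_nonneg (a : ℝ) (k : Fin 4 → ℝ) : 0 ≤ latticeSigmaSq a k :=
  Finset.sum_nonneg fun _ _ => Complex.normSq_nonneg _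

theorem covMatrix_eq_smul (a M ξ : ℝ) (k : Fin 4 → ℝ) :
    covMatrix a M ξ k = (latticeSigmaSq a k + M ^ 2)⁻¹ •
      (1 + (ξ / ((1 - ξ) * latticeSigmaSq a k + M ^ 2)) •
        vecMulVec (star (latticeSigma a k)) (latticeSigma a k)) := by
  ext μ ν
  simp only [covMatrix, of_apply, Matrix.smul_apply, Matrix.add_apply, one_apply,
    vecMulVec_apply, Pi.star_apply, RCLike.star_def, Complex.real_smul]
  push_cast
  ring

theorem covMatrix_isHermitian_posDef_general (a M ξ : ℝ) (hM : 0 < M)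
    (hξ0 : 0 ≤ ξ) (hξ1 : ξ ≤ 1) (k : Fin 4 → ℝ) :
    (covMatrix a M ξ k).IsHermitian ∧ (covMatrix a M ξ k).PosDef := by
  have hS := latticeSigmaSq_nonneg a k
  have hD : 0 < (1 - ξ) * latticeSigmaSq a k + M ^ 2 := by
    have := mul_nonneg (sub_nonneg.mpr hξ1) hS
    positivity
  have hG : (covMatrix a M ξ k).PosDef := by
    rw [covMatrix_eq_smul]
    exact (posDef_one_add_smul_vecMulVec_star_self _ (div_nonneg hξ0 hD.le)).smul
      (by positivity)
  exact ⟨hG.isHermitian, hG⟩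

/-- The momentum-space covariance of the non-compact massive lattice `U(1)` gauge field is a
Hermitian positive definite matrix, for any `a > 0`, `M > 0`, gauge-fixing `0 ≤ ξ ≤ 1` and
any momentum `k ∈ ℝ⁴`. -/
theorem covMatrix_isHermitian_posDef (a M ξ : ℝ) (ha : 0 < a) (hM : 0 < M)
    (hξ0 : 0 ≤ ξ) (hξ1 : ξ ≤ 1) (k : Fin 4 → ℝ) :
    (covMatrix a M ξ k).IsHermitian ∧ (covMatrix a M ξ k).PosDef :=
  covMatrix_isHermitian_posDef_general a M ξ hM hξ0 hξ1 k
end
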